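/- arXiv:1903.03456 — 3 statements merged into one kernel-verified Lean document; each statement's English description precedes it below -/
import Mathlib

section
/- Two matrices A, B ∈ M_{m,n}(ℂ) are disjoint if and only if there exist unitary matrices U ∈ M_m(ℂ), V ∈ M_n(ℂ), integers 0 ≤ k ≤ p ≤ min(m,n), and positive real numbers a_1, …, a_k, b_{k+1}, …, b_p such that UAV = Σ_{j=1}^{k} a_j E_{jj} and UBV = Σ_{j=k+1}^{p} b_j E_{jj}, where E_{jj} ∈ M_{m,n}(ℂ) denotes the matrix with 1 in the (j,j) entry and 0 elsewhere. -/
open Matrix Kronecker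

namespace Paper

/-- Two rectangular complex matrices are disjoint if `Aᴴ * B = 0` and `A * Bᴴ = 0`. -/
def MDisjoint {m n : ℕ} (A B : Matrix (Fin m) (Fin n) ℂ) : Prop :=
  Aᴴ * B = 0 ∧ A * Bᴴ = 0

/-- The block diagonal matrix `diag(A ⊗ Q1, Aᵗ ⊗ Q2, 0)`. -/
def stdBlocks {m n q1 q2 t1 t2 : ℕ}
    (Q1 : Fin q1 → ℝ) (Q2 : Fin q2 → ℝ) (A : Matrix (Fin m) (Fin n) ℂ) :
    Matrix ((Fin m × Fin q1) ⊕ ((Fin n × Fin q2) ⊕ Fin t1))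
           ((Fin n × Fin q1) ⊕ ((Fin m × Fin q2) ⊕ Fin t2)) ℂ :=
  Matrix.fromBlocks (A ⊗ₖ Matrix.diagonal fun i => (Q1 i : ℂ)) 0 0
    (Matrix.fromBlocks (Aᵀ ⊗ₖ Matrix.diagonal fun i => (Q2 i : ℂ)) 0 0 0)

/-- A linear map `Φ : M_{m,n}(ℂ) → M_{r,s}(ℂ)` is in standard form. -/
def IsStandardForm {m n r s : ℕ}
    (Φ : Matrix (Fin m) (Fin n) ℂ →ₗ[ℂ] Matrix (Fin r) (Fin s) ℂ) : Prop :=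
  ∃ (q1 q2 : ℕ) (Q1 : Fin q1 → ℝ) (Q2 : Fin q2 → ℝ)
    (U : Matrix (Fin r) (Fin r) ℂ) (V : Matrix (Fin s) (Fin s) ℂ)
    (er : (Fin m × Fin q1) ⊕ ((Fin n × Fin q2) ⊕ Fin (r - (m * q1 + n * q2))) ≃ Fin r)
    (es : (Fin n × Fin q1) ⊕ ((Fin m × Fin q2) ⊕ Fin (s - (n * q1 + m * q2))) ≃ Fin s),
    m * q1 + n * q2 ≤ r ∧ n * q1 + m * q2 ≤ s ∧
    (∀ i, 0 < Q1 i) ∧ (∀ i, 0 < Q2 i) ∧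
    U ∈ Matrix.unitaryGroup (Fin r) ℂ ∧ V ∈ Matrix.unitaryGroup (Fin s) ℂ ∧
    ∀ A, Φ A = U * (Matrix.reindex er es (stdBlocks Q1 Q2 A)) * V


/-- The m×n matrix with a single entry `1` at position `(j, j)` (ℕ-indexed). -/
def diagUnit (m n j : ℕ) : Matrix (Fin m) (Fin n) ℂ :=
  Matrix.of fun i i' => if (i : ℕ) = j ∧ (i' : ℕ) = j then 1 else 0

/-!
If `A ≠ 0`, take a unit eigenvector `v` of `AᴴA` with eigenvalue `σ² > 0` and put `u = Av / σ`,
so that `Av = σu` and `Aᴴu = σv`. Disjointness gives `Bv = 0` and `Bᴴu = 0`, since `BAᴴ = 0` and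
`BᴴA = 0`. Completing `u` and `v` to unitaries turns `A, B` into `diag(σ, A₂), diag(0, B₂)` with
`A₂ ⊥ B₂`, and induction on the size finishes; once `A = 0`, the same step applied to the pair
`(B, 0)` diagonalizes `B`. Conversely, `E_ii ⊥ E_jj` for `i ≠ j`, and disjointness is invariant
under `(A, B) ↦ (UAV, UBV)`.
-/

section Unitary

variable {ι κ : Type*} [Fintype ι] [Fintype κ]

theorem exists_mem_unitaryGroup_mulVec_single_eq [DecidableEq ι] (i₀ : ι) {v : ι → ℂ}
    (hv : star v ⬝ᵥ v = 1) : ∃ U ∈ unitaryGroup ι ℂ, U *ᵥ Pi.single i₀ 1 = v := by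
  have hon : Orthonormal ℂ (({i₀} : Set ι).domRestrict fun _ => WithLp.toLp 2 v) := by
    rw [orthonormal_iff_ite]
    rintro ⟨i, rfl⟩ ⟨j, rfl⟩
    simpa only [Set.domRestrict_apply, EuclideanSpace.inner_eq_star_dotProduct, if_true,
      dotProduct_comm] using hv
  obtain ⟨b, hb⟩ := hon.exists_orthonormalBasis_extension_of_card_eq (by simp)
  refine ⟨(EuclideanSpace.basisFun ι ℂ).toBasis.toMatrix b,
    (EuclideanSpace.basisFun ι ℂ).toMatrix_orthonormalBasis_mem_unitary b, ?_⟩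
  ext i
  simp [Module.Basis.toMatrix_apply, hb i₀ rfl]

open scoped ComplexOrder in
theorem exists_singular_pair [DecidableEq κ] {A : Matrix ι κ ℂ} (hA : A ≠ 0) :
    ∃ (σ : ℝ) (u : ι → ℂ) (v : κ → ℂ), 0 < σ ∧ star u ⬝ᵥ u = 1 ∧ star v ⬝ᵥ v = 1 ∧
      A *ᵥ v = (σ : ℂ) • u ∧ Aᴴ *ᵥ u = (σ : ℂ) • v := by
  have hH := isHermitian_conjTranspose_mul_self A
  obtain ⟨j, hj⟩ := Function.ne_iff.mp <|
    hH.eigenvalues_eq_zero_iff.not.mpr (mt conjTranspose_mul_self_eq_zero.mp hA)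
  have hpos : 0 < hH.eigenvalues j :=
    ((posSemidef_conjTranspose_mul_self A).eigenvalues_nonneg j).lt_of_ne' hj
  set σ := √(hH.eigenvalues j)
  have hσ : (σ : ℂ) ≠ 0 := Complex.ofReal_ne_zero.mpr (Real.sqrt_pos.mpr hpos).ne'
  set v : κ → ℂ := (hH.eigenvectorBasis j).ofLp
  have hv : star v ⬝ᵥ v = 1 := by
    have h := orthonormal_iff_ite.mp hH.eigenvectorBasis.orthonormal j j
    rwa [if_pos rfl, EuclideanSpace.inner_eq_star_dotProduct, dotProduct_comm] at h
  have heig : (Aᴴ * A) *ᵥ v = (σ : ℂ) ^ 2 • v := by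
    rw [hH.mulVec_eigenvectorBasis j, ← Complex.ofReal_pow, Real.sq_sqrt hpos.le,
      Complex.coe_smul]
  set u := (σ : ℂ)⁻¹ • A *ᵥ v
  have hAv : A *ᵥ v = (σ : ℂ) • u := by rw [smul_smul, mul_inv_cancel₀ hσ, one_smul]
  have hAu : Aᴴ *ᵥ u = (σ : ℂ) • v := by
    rw [mulVec_smul, mulVec_mulVec, heig, smul_smul]
    congr 1
    field_simp
  refine ⟨σ, u, v, Real.sqrt_pos.mpr hpos, ?_, hv, hAv, hAu⟩
  calc star u ⬝ᵥ u = (σ : ℂ)⁻¹ * (star (Aᴴ *ᵥ u) ⬝ᵥ v) := by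
        rw [dotProduct_smul, dotProduct_mulVec, star_mulVec, conjTranspose_conjTranspose,
          smul_eq_mul]
    _ = 1 := by
        rw [hAu, star_smul, smul_dotProduct, hv, Complex.star_def, Complex.conj_ofReal]
        simp [hσ]

theorem conjTranspose_mul_mul_mulVec_eq [DecidableEq ι] {U : Matrix ι ι ℂ} {V : Matrix κ κ ℂ}
    {A : Matrix ι κ ℂ} {x u : ι → ℂ} {y v : κ → ℂ} {c : ℂ} (hU : U ∈ unitaryGroup ι ℂ)
    (hu : U *ᵥ x = u) (hv : V *ᵥ y = v) (hA : A *ᵥ v = c • u) :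
    (Uᴴ * A * V) *ᵥ y = c • x := by
  rw [← mulVec_mulVec, hv, ← mulVec_mulVec, hA, mulVec_smul, ← hu, mulVec_mulVec,
    ← star_eq_conjTranspose, Unitary.star_mul_self_of_mem hU, one_mulVec]

end Unitary

section

variable {m n : ℕ}

theorem MDisjoint.unitary_mul_mul {A B : Matrix (Fin m) (Fin n) ℂ} {U : Matrix (Fin m) (Fin m) ℂ}
    {V : Matrix (Fin n) (Fin n) ℂ} (hU : U ∈ unitaryGroup (Fin m) ℂ)
    (hV : V ∈ unitaryGroup (Fin n) ℂ) (h : MDisjoint A B) :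
    MDisjoint (U * A * V) (U * B * V) := by
  have hUU : Uᴴ * U = 1 := Unitary.star_mul_self_of_mem hU
  have hVV : V * Vᴴ = 1 := Unitary.mul_star_self_of_mem hV
  constructor
  · calc (U * A * V)ᴴ * (U * B * V) = Vᴴ * (Aᴴ * (Uᴴ * U) * B) * V := by
          simp only [conjTranspose_mul, Matrix.mul_assoc]
      _ = 0 := by rw [hUU, Matrix.mul_one, h.1, Matrix.mul_zero, Matrix.zero_mul]
  · calc U * A * V * (U * B * V)ᴴ = U * (A * (V * Vᴴ) * Bᴴ) * Uᴴ := by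
          simp only [conjTranspose_mul, Matrix.mul_assoc]
      _ = 0 := by rw [hVV, Matrix.mul_one, h.2, Matrix.mul_zero, Matrix.zero_mul]

theorem mdisjoint_unitary_mul_mul_iff {A B : Matrix (Fin m) (Fin n) ℂ}
    {U : Matrix (Fin m) (Fin m) ℂ} {V : Matrix (Fin n) (Fin n) ℂ}
    (hU : U ∈ unitaryGroup (Fin m) ℂ) (hV : V ∈ unitaryGroup (Fin n) ℂ) :
    MDisjoint (U * A * V) (U * B * V) ↔ MDisjoint A B := by
  refine ⟨fun h => ?_, MDisjoint.unitary_mul_mul hU hV⟩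
  have hcancel : ∀ C : Matrix (Fin m) (Fin n) ℂ, star U * (U * C * V) * star V = C := fun C => by
    simp only [Matrix.mul_assoc, Unitary.mul_star_self_of_mem hV, Matrix.mul_one]
    rw [← Matrix.mul_assoc, Unitary.star_mul_self_of_mem hU, Matrix.one_mul]
  simpa only [hcancel] using h.unitary_mul_mul (Unitary.star_mem hU) (Unitary.star_mem hV)

theorem mdisjoint_zero_right (A : Matrix (Fin m) (Fin n) ℂ) : MDisjoint A 0 := by
  simp [MDisjoint]

theorem diagUnit_conjTranspose (j : ℕ) : (diagUnit m n j)ᴴ = diagUnit n m j := by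
  ext i i'
  simp only [conjTranspose_apply, diagUnit, of_apply, and_comm]
  split_ifs <;> simp

theorem diagUnit_mul_diagUnit_of_ne {r i j : ℕ} (h : i ≠ j) :
    diagUnit m n i * diagUnit n r j = 0 := by
  ext a c
  simp only [mul_apply, diagUnit, of_apply, Matrix.zero_apply]
  refine Finset.sum_eq_zero fun l _ => ?_
  split_ifs <;> simp_all

theorem sum_diagUnit_mul_sum_diagUnit_of_disjoint {r : ℕ} {s t : Finset ℕ} (hst : Disjoint s t)
    (c d : ℕ → ℂ) :
    (∑ i ∈ s, c i • diagUnit m n i) * (∑ j ∈ t, d j • diagUnit n r j) = 0 := by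
  rw [Matrix.sum_mul]
  refine Finset.sum_eq_zero fun i hi => ?_
  rw [Matrix.mul_sum]
  refine Finset.sum_eq_zero fun j hj => ?_
  rw [Matrix.smul_mul, Matrix.mul_smul,
    diagUnit_mul_diagUnit_of_ne (Finset.disjoint_iff_ne.mp hst i hi j hj), smul_zero, smul_zero]

theorem mdisjoint_sum_diagUnit {s t : Finset ℕ} (hst : Disjoint s t) (c d : ℕ → ℂ) :
    MDisjoint (∑ i ∈ s, c i • diagUnit m n i) (∑ j ∈ t, d j • diagUnit m n j) := by
  simp only [MDisjoint, conjTranspose_sum, conjTranspose_smul, diagUnit_conjTranspose]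
  exact ⟨sum_diagUnit_mul_sum_diagUnit_of_disjoint hst _ _,
    sum_diagUnit_mul_sum_diagUnit_of_disjoint hst _ _⟩

def blockCons (c : ℂ) (Y : Matrix (Fin m) (Fin n) ℂ) : Matrix (Fin (m + 1)) (Fin (n + 1)) ℂ :=
  of (Fin.cons (Fin.cons c 0) fun i => Fin.cons 0 (Y i))

section BlockCons

variable {r : ℕ} (c d : ℂ)

@[simp] theorem blockCons_zero_zero (Y : Matrix (Fin m) (Fin n) ℂ) : blockCons c Y 0 0 = c := rfl

@[simp] theorem blockCons_zero_succ (Y : Matrix (Fin m) (Fin n) ℂ) (j : Fin n) :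
    blockCons c Y 0 j.succ = 0 := rfl

@[simp] theorem blockCons_succ_zero (Y : Matrix (Fin m) (Fin n) ℂ) (i : Fin m) :
    blockCons c Y i.succ 0 = 0 := rfl

@[simp] theorem blockCons_succ_succ (Y : Matrix (Fin m) (Fin n) ℂ) (i : Fin m) (j : Fin n) :
    blockCons c Y i.succ j.succ = Y i j := rfl

theorem blockCons_mul_blockCons (X : Matrix (Fin m) (Fin n) ℂ) (Y : Matrix (Fin n) (Fin r) ℂ) :
    blockCons c X * blockCons d Y = blockCons (c * d) (X * Y) := by
  ext i j
  rw [mul_apply, Fin.sum_univ_succ]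
  induction i using Fin.cases <;> induction j using Fin.cases <;> simp [mul_apply]

theorem blockCons_conjTranspose (X : Matrix (Fin m) (Fin n) ℂ) :
    (blockCons c X)ᴴ = blockCons (star c) Xᴴ := by
  ext i j
  induction i using Fin.cases <;> induction j using Fin.cases <;> simp

theorem blockCons_one_one : blockCons 1 (1 : Matrix (Fin m) (Fin m) ℂ) = 1 := by
  ext i j
  induction i using Fin.cases <;> induction j using Fin.cases <;>
    simp [one_apply, Fin.succ_ne_zero, (Fin.succ_ne_zero _).symm]

theorem blockCons_one_mem_unitaryGroup {X : Matrix (Fin m) (Fin m) ℂ}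
    (hX : X ∈ unitaryGroup (Fin m) ℂ) : blockCons 1 X ∈ unitaryGroup (Fin (m + 1)) ℂ := by
  rw [mem_unitaryGroup_iff, star_eq_conjTranspose, blockCons_conjTranspose,
    blockCons_mul_blockCons, ← star_eq_conjTranspose, Unitary.mul_star_self_of_mem hX]
  simpa using blockCons_one_one

theorem blockCons_sum_diagUnit (s : Finset ℕ) (a : ℕ → ℂ) :
    blockCons c (∑ j ∈ s, a j • diagUnit m n j) =
      c • diagUnit (m + 1) (n + 1) 0 + ∑ j ∈ s, a j • diagUnit (m + 1) (n + 1) (j + 1) := by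
  ext i i'
  induction i using Fin.cases <;> induction i' using Fin.cases <;>
    simp [Matrix.sum_apply, diagUnit, Fin.val_succ]

variable {c d} in
theorem MDisjoint.of_blockCons {A B : Matrix (Fin m) (Fin n) ℂ}
    (h : MDisjoint (blockCons c A) (blockCons d B)) : MDisjoint A B := by
  obtain ⟨h₁, h₂⟩ := h
  rw [blockCons_conjTranspose, blockCons_mul_blockCons] at h₁ h₂
  exact ⟨ext fun i j => by simpa using congrFun₂ h₁ i.succ j.succ,
    ext fun i j => by simpa using congrFun₂ h₂ i.succ j.succ⟩

end BlockCons

theorem eq_blockCons_of_mulVec_single (M : Matrix (Fin (m + 1)) (Fin (n + 1)) ℂ) {c : ℂ}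
    (hcol : M *ᵥ Pi.single 0 1 = c • Pi.single 0 1)
    (hrow : Mᴴ *ᵥ Pi.single 0 1 = star c • Pi.single 0 1) :
    M = blockCons c (M.submatrix Fin.succ Fin.succ) := by
  ext i j
  induction i using Fin.cases with
  | zero => induction j using Fin.cases with
    | zero => simpa using congrFun hcol 0
    | succ j => simpa using congrArg star (congrFun hrow j.succ)
  | succ i => induction j using Fin.cases with
    | zero => simpa using congrFun hcol i.succ
    | succ j => rfl

theorem exists_blockCons_of_mdisjoint {A B : Matrix (Fin (m + 1)) (Fin (n + 1)) ℂ}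
    (hd : MDisjoint A B) (hA : A ≠ 0) :
    ∃ (U : Matrix (Fin (m + 1)) (Fin (m + 1)) ℂ) (V : Matrix (Fin (n + 1)) (Fin (n + 1)) ℂ)
      (σ : ℝ) (A₂ B₂ : Matrix (Fin m) (Fin n) ℂ),
      U ∈ unitaryGroup (Fin (m + 1)) ℂ ∧ V ∈ unitaryGroup (Fin (n + 1)) ℂ ∧
      0 < σ ∧ MDisjoint A₂ B₂ ∧ U * A * V = blockCons σ A₂ ∧ U * B * V = blockCons 0 B₂ := by
  obtain ⟨σ, u, v, hσ, hu, hv, hAv, hAu⟩ := exists_singular_pair hA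
  have hσ₀ : (σ : ℂ) ≠ 0 := Complex.ofReal_ne_zero.mpr hσ.ne'
  have hBv : B *ᵥ v = (0 : ℂ) • u := by
    have hBA : B * Aᴴ = 0 := by simpa using congrArg conjTranspose hd.2
    rw [← inv_smul_smul₀ hσ₀ v, ← hAu, mulVec_smul, mulVec_mulVec, hBA, zero_mulVec,
      smul_zero, zero_smul]
  have hBu : Bᴴ *ᵥ u = (0 : ℂ) • v := by
    have hBA : Bᴴ * A = 0 := by simpa using congrArg conjTranspose hd.1
    rw [← inv_smul_smul₀ hσ₀ u, ← hAv, mulVec_smul, mulVec_mulVec, hBA, zero_mulVec,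
      smul_zero, zero_smul]
  obtain ⟨U, hU, hUu⟩ := exists_mem_unitaryGroup_mulVec_single_eq 0 hu
  obtain ⟨V, hV, hVv⟩ := exists_mem_unitaryGroup_mulVec_single_eq 0 hv
  have hadj : ∀ C : Matrix (Fin (m + 1)) (Fin (n + 1)) ℂ, (Uᴴ * C * V)ᴴ = Vᴴ * Cᴴ * U := by
    intro C
    rw [conjTranspose_mul, conjTranspose_mul, conjTranspose_conjTranspose, Matrix.mul_assoc]
  have hσstar : star (σ : ℂ) = σ := Complex.conj_ofReal σ
  have hA' := eq_blockCons_of_mulVec_single (Uᴴ * A * V)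
    (conjTranspose_mul_mul_mulVec_eq hU hUu hVv hAv)
    (by rw [hadj, hσstar]; exact conjTranspose_mul_mul_mulVec_eq hV hVv hUu hAu)
  have hB' := eq_blockCons_of_mulVec_single (Uᴴ * B * V)
    (conjTranspose_mul_mul_mulVec_eq hU hUu hVv hBv)
    (by rw [hadj, star_zero]; exact conjTranspose_mul_mul_mulVec_eq hV hVv hUu hBu)
  have hUstar : Uᴴ ∈ unitaryGroup (Fin (m + 1)) ℂ := Unitary.star_mem hU
  refine ⟨Uᴴ, V, σ, _, _, hUstar, hV, hσ, ?_, hA', hB'⟩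
  exact MDisjoint.of_blockCons (hA' ▸ hB' ▸ hd.unitary_mul_mul hUstar hV)

def HasSimultaneousSVD (A B : Matrix (Fin m) (Fin n) ℂ) : Prop :=
  ∃ (U : Matrix (Fin m) (Fin m) ℂ) (V : Matrix (Fin n) (Fin n) ℂ) (k p : ℕ) (a b : ℕ → ℝ),
    U ∈ unitaryGroup (Fin m) ℂ ∧ V ∈ unitaryGroup (Fin n) ℂ ∧
    k ≤ p ∧ p ≤ min m n ∧
    (∀ j < k, 0 < a j) ∧ (∀ j, k ≤ j → j < p → 0 < b j) ∧
    U * A * V = ∑ j ∈ Finset.range k, (a j : ℂ) • diagUnit m n j ∧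
    U * B * V = ∑ j ∈ Finset.Ico k p, (b j : ℂ) • diagUnit m n j

namespace HasSimultaneousSVD

theorem mdisjoint {A B : Matrix (Fin m) (Fin n) ℂ} (h : HasSimultaneousSVD A B) :
    MDisjoint A B := by
  obtain ⟨U, V, k, p, a, b, hU, hV, -, -, -, -, hA, hB⟩ := h
  rw [← mdisjoint_unitary_mul_mul_iff hU hV, hA, hB]
  refine mdisjoint_sum_diagUnit (Finset.disjoint_left.mpr fun j hj hj' => ?_) _ _
  simp only [Finset.mem_range, Finset.mem_Ico] at hj hj'
  omega

theorem zero : HasSimultaneousSVD (0 : Matrix (Fin m) (Fin n) ℂ) 0 :=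
  ⟨1, 1, 0, 0, 0, 0, one_mem _, one_mem _, le_rfl, Nat.zero_le _, by simp, by simp, by simp,
    by simp⟩

theorem swap_zero {B : Matrix (Fin m) (Fin n) ℂ} (h : HasSimultaneousSVD B 0) :
    HasSimultaneousSVD 0 B := by
  obtain ⟨U, V, k, p, a, b, hU, hV, hkp, hp, ha, -, hB, -⟩ := h
  exact ⟨U, V, 0, k, 0, a, hU, hV, Nat.zero_le _, hkp.trans hp, by simp,
    fun j _ hj => ha j hj, by simp, by rw [hB, Finset.range_eq_Ico]⟩

theorem of_unitary_mul_mul {A B : Matrix (Fin m) (Fin n) ℂ} {U : Matrix (Fin m) (Fin m) ℂ}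
    {V : Matrix (Fin n) (Fin n) ℂ} (hU : U ∈ unitaryGroup (Fin m) ℂ)
    (hV : V ∈ unitaryGroup (Fin n) ℂ) (h : HasSimultaneousSVD (U * A * V) (U * B * V)) :
    HasSimultaneousSVD A B := by
  obtain ⟨U', V', k, p, a, b, hU', hV', hkp, hp, ha, hb, hA, hB⟩ := h
  refine ⟨U' * U, V * V', k, p, a, b, mul_mem hU' hU, mul_mem hV hV', hkp, hp, ha, hb, ?_, ?_⟩
  · simpa only [Matrix.mul_assoc] using hA
  · simpa only [Matrix.mul_assoc] using hB

theorem blockCons {A B : Matrix (Fin m) (Fin n) ℂ} (h : HasSimultaneousSVD A B) {σ : ℝ}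
    (hσ : 0 < σ) : HasSimultaneousSVD (blockCons σ A) (blockCons 0 B) := by
  obtain ⟨U, V, k, p, a, b, hU, hV, hkp, hp, ha, hb, hA, hB⟩ := h
  refine ⟨Paper.blockCons 1 U, Paper.blockCons 1 V, k + 1, p + 1,
    fun | 0 => σ | j + 1 => a j, fun | 0 => 0 | j + 1 => b j,
    blockCons_one_mem_unitaryGroup hU, blockCons_one_mem_unitaryGroup hV,
    by omega, by omega, ?_, ?_, ?_, ?_⟩
  · rintro (_ | j) hj
    exacts [hσ, ha j (by omega)]
  · rintro (_ | j) hj hj'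
    exacts [by omega, hb j (by omega) (by omega)]
  · rw [blockCons_mul_blockCons, blockCons_mul_blockCons, one_mul, mul_one, hA,
      blockCons_sum_diagUnit, Finset.sum_range_succ']
    exact add_comm _ _
  · rw [blockCons_mul_blockCons, blockCons_mul_blockCons, one_mul, mul_one, hB,
      blockCons_sum_diagUnit, zero_smul, zero_add, ← Finset.sum_Ico_add']

end HasSimultaneousSVD

end

theorem MDisjoint.hasSimultaneousSVD :
    ∀ {m n : ℕ} {A B : Matrix (Fin m) (Fin n) ℂ}, MDisjoint A B → HasSimultaneousSVD A B
  | 0, _, A, B, _ => by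
    rw [Subsingleton.elim A 0, Subsingleton.elim B 0]
    exact .zero
  | _ + 1, 0, A, B, _ => by
    rw [Subsingleton.elim A 0, Subsingleton.elim B 0]
    exact .zero
  | m + 1, n + 1, A, B, hd => by
    have step : ∀ {A B : Matrix (Fin (m + 1)) (Fin (n + 1)) ℂ}, MDisjoint A B → A ≠ 0 →
        HasSimultaneousSVD A B := fun hAB hA₀ => by
      obtain ⟨U, V, σ, A₂, B₂, hU, hV, hσ, hd₂, hA₂, hB₂⟩ := exists_blockCons_of_mdisjoint hAB hA₀
      refine .of_unitary_mul_mul hU hV ?_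
      rw [hA₂, hB₂]
      exact (MDisjoint.hasSimultaneousSVD hd₂).blockCons hσ
    by_cases hA : A = 0
    · subst hA
      by_cases hB : B = 0
      · exact hB ▸ .zero
      · exact (step (mdisjoint_zero_right B) hB).swap_zero
    · exact step hd hA

/-- `A ⊥ B` iff there are unitaries `U, V`, integers `0 ≤ k ≤ p ≤ min m n`
and positive reals `a_1, …, a_k`, `b_{k+1}, …, b_p` with
`U A V = Σ_{j=1}^k a_j E_{jj}` and `U B V = Σ_{j=k+1}^p b_j E_{jj}`. -/
theorem disjoint_iff_simultaneous_svd
    {m n : ℕ} (A B : Matrix (Fin m) (Fin n) ℂ) :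
    MDisjoint A B ↔
      ∃ (U : Matrix (Fin m) (Fin m) ℂ) (V : Matrix (Fin n) (Fin n) ℂ)
        (k p : ℕ) (a b : ℕ → ℝ),
        U ∈ Matrix.unitaryGroup (Fin m) ℂ ∧ V ∈ Matrix.unitaryGroup (Fin n) ℂ ∧
        k ≤ p ∧ p ≤ min m n ∧
        (∀ j < k, 0 < a j) ∧ (∀ j, k ≤ j → j < p → 0 < b j) ∧
        U * A * V = ∑ j ∈ Finset.range k, (a j : ℂ) • diagUnit m n j ∧
        U * B * V = ∑ j ∈ Finset.Ico k p, (b j : ℂ) • diagUnit m n j :=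
  ⟨MDisjoint.hasSimultaneousSVD, HasSimultaneousSVD.mdisjoint⟩

end Paper
end

section
/- Let Q1 ∈ M_{k_1}(ℝ) and Q2 ∈ M_{k_2}(ℝ) with k_1 + k_2 = k be diagonal matrices with positive diagonal entries arranged in descending order, and let Φ : M_2(ℂ) → M_{r,s}(ℂ) be a nonzero linear map preserving disjointness. Suppose that for each (i,j) ∈ {(1,1), (2,1), (2,2)}, Φ(E_{ij}) equals the r×s block-diagonal matrix diag(E_{ij} ⊗ Q1, E_{ji} ⊗ Q2, 0) (with a zero block of size (r−2k)×(s−2k)). Then Φ(E_{12}) = diag(E_{12} ⊗ Q1, E_{21} ⊗ Q2, 0) as well. -/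
open Matrix Kronecker

namespace Paper

/-!
Let `F A = diag(A ⊗ Q1, Aᵀ ⊗ Q2, 0)` be the model map and `Z = Φ E₁₂ - F E₁₂`. Since `Φ` and
`F` agree on the other three matrix units, `Φ A = F A + a₁₂ Z`. A disjoint pair `A ⊥ B` with
`a₁₂ = 1`, `b₁₂ = 0` yields `Zᴴ F B = 0`; three such pairs give `Zᴴ F 1 = 0`, and as the range
of every `F A` lies in that of `F 1`, `Zᴴ F A = 0` for all `A`. The disjoint pair
`[[1, 1], [1, 1]] ⊥ [[1, -1], [-1, 1]]` then gives `0 = (F A + Z)ᴴ (F B - Z) = -Zᴴ Z`, so `Z = 0`.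
-/

section StdBlocks

variable {m n k1 k2 t1 t2 : ℕ} (Q1 : Fin k1 → ℝ) (Q2 : Fin k2 → ℝ)

@[simps]
def stdBlocksLinearMap :
    Matrix (Fin m) (Fin n) ℂ →ₗ[ℂ]
      Matrix ((Fin m × Fin k1) ⊕ ((Fin n × Fin k2) ⊕ Fin t1))
        ((Fin n × Fin k1) ⊕ ((Fin m × Fin k2) ⊕ Fin t2)) ℂ where
  toFun := stdBlocks Q1 Q2
  map_add' A B := by
    simp only [stdBlocks, add_kronecker, transpose_add, fromBlocks_add, add_zero]
  map_smul' c A := by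
    simp only [stdBlocks, smul_kronecker, transpose_smul, fromBlocks_smul, smul_zero,
      RingHom.id_apply]

theorem conjTranspose_stdBlocks_mul_stdBlocks {A B : Matrix (Fin m) (Fin n) ℂ}
    (h : MDisjoint A B) :
    (stdBlocks (t1 := t1) (t2 := t2) Q1 Q2 A)ᴴ * stdBlocks (t1 := t1) (t2 := t2) Q1 Q2 B = 0 := by
  have hT : (Aᵀ)ᴴ * Bᵀ = 0 := by
    have hBA : B * Aᴴ = 0 := by simpa using congrArg conjTranspose h.2
    rw [conjTranspose_transpose_eq_transpose_conjTranspose, ← transpose_mul, hBA, transpose_zero]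
  simp only [stdBlocks, fromBlocks_conjTranspose, fromBlocks_multiply, conjTranspose_kronecker,
    ← mul_kronecker_mul, h.1, hT]
  simp

theorem stdBlocks_eq_stdBlocks_one_mul (A : Matrix (Fin m) (Fin m) ℂ) :
    stdBlocks (t1 := t1) (t2 := t2) Q1 Q2 A =
      stdBlocks (t1 := t1) (t2 := t2) Q1 Q2 (1 : Matrix (Fin m) (Fin m) ℂ) *
        stdBlocks (t1 := t2) (t2 := t2) (1 : Fin k1 → ℝ) (1 : Fin k2 → ℝ) A := by
  unfold stdBlocks
  rw [fromBlocks_multiply, fromBlocks_multiply, ← mul_kronecker_mul, ← mul_kronecker_mul]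
  simp

end StdBlocks

theorem conjTranspose_reindex_mul_reindex {α l m n l' m' n' : Type*} [Star α] [AddCommMonoid α]
    [Mul α] [Fintype l] [Fintype l'] (eₗ : l ≃ l') (eₘ : m ≃ m') (eₙ : n ≃ n') (M : Matrix l m α)
    (N : Matrix l n α) :
    (reindex eₗ eₘ M)ᴴ * reindex eₗ eₙ N = reindex eₘ eₙ (Mᴴ * N) := by
  rw [conjTranspose_reindex, reindex_apply, reindex_apply, reindex_apply, submatrix_mul_equiv]

theorem apply_eq_add_smul_of_eq_on_single {R M : Type*} [CommRing R] [AddCommGroup M]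
    [Module R M] {Φ F : Matrix (Fin 2) (Fin 2) R →ₗ[R] M}
    (h00 : Φ (single 0 0 1) = F (single 0 0 1)) (h10 : Φ (single 1 0 1) = F (single 1 0 1))
    (h11 : Φ (single 1 1 1) = F (single 1 1 1)) (A : Matrix (Fin 2) (Fin 2) R) :
    Φ A = F A + A 0 1 • (Φ (single 0 1 1) - F (single 0 1 1)) := by
  have hA : A = A 0 0 • single 0 0 1 + A 0 1 • single 0 1 1 + A 1 0 • single 1 0 1 +
      A 1 1 • single 1 1 1 := by
    ext i j
    fin_cases i <;> fin_cases j <;> simp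
  have hdiff : Φ A - F A = A 0 1 • (Φ (single 0 1 1) - F (single 0 1 1)) := by
    conv_lhs => rw [hA]
    simp only [map_add, map_smul, h00, h10, h11]
    module
  rw [← hdiff, add_sub_cancel]

section FourthCorner

variable {r s : ℕ} {Φ F : Matrix (Fin 2) (Fin 2) ℂ →ₗ[ℂ] Matrix (Fin r) (Fin s) ℂ}
  {Z : Matrix (Fin r) (Fin s) ℂ}

theorem conjTranspose_mul_eq_zero_of_mdisjoint
    (hΦ : ∀ A B, MDisjoint A B → (Φ A)ᴴ * Φ B = 0) (hF : ∀ A B, MDisjoint A B → (F A)ᴴ * F B = 0)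
    (hsplit : ∀ A, Φ A = F A + A 0 1 • Z) {A B : Matrix (Fin 2) (Fin 2) ℂ}
    (hAB : MDisjoint A B) (hA : A 0 1 = 1) (hB : B 0 1 = 0) : Zᴴ * F B = 0 := by
  have h := hΦ A B hAB
  rwa [hsplit, hsplit, hA, hB, one_smul, zero_smul, add_zero, conjTranspose_add, Matrix.add_mul,
    hF A B hAB, zero_add] at h

open ComplexOrder in
theorem eq_zero_of_mdisjoint
    (hΦ : ∀ A B, MDisjoint A B → (Φ A)ᴴ * Φ B = 0) (hF : ∀ A B, MDisjoint A B → (F A)ᴴ * F B = 0)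
    (hsplit : ∀ A, Φ A = F A + A 0 1 • Z) (hZF : ∀ A, Zᴴ * F A = 0)
    {A B : Matrix (Fin 2) (Fin 2) ℂ} (hAB : MDisjoint A B) (hA : A 0 1 = 1) (hB : B 0 1 = -1) :
    Z = 0 := by
  have hFZ : (F A)ᴴ * Z = 0 := by
    rw [← conjTranspose_conjTranspose Z, ← conjTranspose_mul, hZF, conjTranspose_zero]
  have h := hΦ A B hAB
  rw [hsplit, hsplit, hA, hB, one_smul, neg_one_smul, conjTranspose_add, Matrix.add_mul,
    Matrix.mul_add, Matrix.mul_add, hF A B hAB, Matrix.mul_neg, hFZ, hZF, Matrix.mul_neg] at h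
  exact conjTranspose_mul_self_eq_zero.mp (by simpa using h)

theorem eq_zero_of_forall_exists_eq_mul
    (hΦ : ∀ A B, MDisjoint A B → (Φ A)ᴴ * Φ B = 0) (hF : ∀ A B, MDisjoint A B → (F A)ᴴ * F B = 0)
    (hsplit : ∀ A, Φ A = F A + A 0 1 • Z)
    (hrange : ∀ A, ∃ G : Matrix (Fin s) (Fin s) ℂ, F A = F 1 * G) : Z = 0 := by
  obtain ⟨d₁, d₂, d₃, d₄⟩ :
      MDisjoint !![0, 1; 0, 0] !![0, 0; 1, 0] ∧ MDisjoint !![1, 1; 0, 0] !![0, 0; 1, -1] ∧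
        MDisjoint !![0, 1; 0, 1] !![1, 0; -1, 0] ∧ MDisjoint !![1, 1; 1, 1] !![1, -1; -1, 1] := by
    refine ⟨?_, ?_, ?_, ?_⟩ <;> constructor <;> ext i j <;> fin_cases i <;> fin_cases j <;>
      simp [mul_apply]
  have h₁ := conjTranspose_mul_eq_zero_of_mdisjoint hΦ hF hsplit d₁ rfl rfl
  have h₂ := conjTranspose_mul_eq_zero_of_mdisjoint hΦ hF hsplit d₂ rfl rfl
  have h₃ := conjTranspose_mul_eq_zero_of_mdisjoint hΦ hF hsplit d₃ rfl rfl
  have hone : Zᴴ * F 1 = 0 := by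
    have h1 : (1 : Matrix (Fin 2) (Fin 2) ℂ) =
        !![1, 0; -1, 0] + !![0, 0; 1, 0] + !![0, 0; 1, 0] - !![0, 0; 1, -1] := by
      ext i j; fin_cases i <;> fin_cases j <;> norm_num
    rw [h1, map_sub, map_add, map_add, Matrix.mul_sub, Matrix.mul_add, Matrix.mul_add, h₁, h₂, h₃,
      add_zero, add_zero, sub_zero]
  refine eq_zero_of_mdisjoint hΦ hF hsplit (fun A => ?_) d₄ rfl rfl
  obtain ⟨G, hG⟩ := hrange A
  rw [hG, ← Matrix.mul_assoc, hone, Matrix.zero_mul]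

end FourthCorner

theorem lemma3b_fourth_corner_general
    {r s k1 k2 : ℕ}
    (Q1 : Fin k1 → ℝ) (Q2 : Fin k2 → ℝ)
    (er : (Fin 2 × Fin k1) ⊕ ((Fin 2 × Fin k2) ⊕ Fin (r - 2 * (k1 + k2))) ≃ Fin r)
    (es : (Fin 2 × Fin k1) ⊕ ((Fin 2 × Fin k2) ⊕ Fin (s - 2 * (k1 + k2))) ≃ Fin s)
    (Φ : Matrix (Fin 2) (Fin 2) ℂ →ₗ[ℂ] Matrix (Fin r) (Fin s) ℂ)
    (hdisj : ∀ A B : Matrix (Fin 2) (Fin 2) ℂ, MDisjoint A B → MDisjoint (Φ A) (Φ B))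
    (hform : ∀ i j : Fin 2, (i, j) = (0, 0) ∨ (i, j) = (1, 0) ∨ (i, j) = (1, 1) →
      Φ (Matrix.single i j 1) =
        Matrix.reindex er es (stdBlocks Q1 Q2 (Matrix.single i j 1))) :
    Φ (Matrix.single 0 1 1) =
      Matrix.reindex er es (stdBlocks Q1 Q2 (Matrix.single 0 1 1)) := by
  let F := (reindexLinearEquiv ℂ ℂ er es).toLinearMap ∘ₗ stdBlocksLinearMap Q1 Q2
  have hF (A B) (hAB : MDisjoint A B) : (F A)ᴴ * F B = 0 := by
    simp only [F, LinearMap.comp_apply, LinearEquiv.coe_coe, coe_reindexLinearEquiv,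
      stdBlocksLinearMap_apply]
    rw [conjTranspose_reindex_mul_reindex, conjTranspose_stdBlocks_mul_stdBlocks Q1 Q2 hAB]
    rfl
  have hrange (A) : ∃ G : Matrix (Fin s) (Fin s) ℂ, F A = F 1 * G :=
    ⟨reindex es es (stdBlocks 1 1 A), by
      simp only [F, LinearMap.comp_apply, LinearEquiv.coe_coe, coe_reindexLinearEquiv,
        stdBlocksLinearMap_apply]
      rw [reindex_apply, reindex_apply, reindex_apply, submatrix_mul_equiv,
        ← stdBlocks_eq_stdBlocks_one_mul]⟩
  have hsplit := apply_eq_add_smul_of_eq_on_single (F := F) (hform 0 0 (by simp))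
    (hform 1 0 (by simp)) (hform 1 1 (by simp))
  exact sub_eq_zero.mp <|
    eq_zero_of_forall_exists_eq_mul (fun A B hAB => (hdisj A B hAB).1) hF hsplit hrange

/-- if `Φ(E_{ij}) = diag(E_{ij} ⊗ Q1, E_{ji} ⊗ Q2, 0)` for
`(i,j) ∈ {(1,1), (2,1), (2,2)}`, then the same form holds for `(1,2)`. -/
theorem lemma3b_fourth_corner
    {r s k1 k2 : ℕ}
    (Q1 : Fin k1 → ℝ) (Q2 : Fin k2 → ℝ)
    (hQ1pos : ∀ i, 0 < Q1 i) (hQ2pos : ∀ i, 0 < Q2 i)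
    (hQ1dec : Antitone Q1) (hQ2dec : Antitone Q2)
    (hkr : 2 * (k1 + k2) ≤ r) (hks : 2 * (k1 + k2) ≤ s)
    (er : (Fin 2 × Fin k1) ⊕ ((Fin 2 × Fin k2) ⊕ Fin (r - 2 * (k1 + k2))) ≃ Fin r)
    (es : (Fin 2 × Fin k1) ⊕ ((Fin 2 × Fin k2) ⊕ Fin (s - 2 * (k1 + k2))) ≃ Fin s)
    (Φ : Matrix (Fin 2) (Fin 2) ℂ →ₗ[ℂ] Matrix (Fin r) (Fin s) ℂ)
    (hΦ : Φ ≠ 0)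
    (hdisj : ∀ A B : Matrix (Fin 2) (Fin 2) ℂ, MDisjoint A B → MDisjoint (Φ A) (Φ B))
    (hform : ∀ i j : Fin 2, (i, j) = (0, 0) ∨ (i, j) = (1, 0) ∨ (i, j) = (1, 1) →
      Φ (Matrix.single i j 1) =
        Matrix.reindex er es (stdBlocks Q1 Q2 (Matrix.single i j 1))) :
    Φ (Matrix.single 0 1 1) =
      Matrix.reindex er es (stdBlocks Q1 Q2 (Matrix.single 0 1 1)) :=
  lemma3b_fourth_corner_general Q1 Q2 er es Φ hdisj hform

end Paper
end

section
/- For all A, B ∈ M_{m,n}(ℂ), the following are equivalent: (a) A*B = 0 and AB* = 0; (b) AA*B + BA*A = 0. -/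
open Matrix Kronecker

namespace Paper

/-- Frobenius: `trace (Mᴴ * M)` is the sum of squared norms of the entries. -/
lemma trace_conjTranspose_mul_self {a b : ℕ} (M : Matrix (Fin a) (Fin b) ℂ) :
    (Mᴴ * M).trace = ∑ j : Fin b, ∑ i : Fin a, (Complex.normSq (M i j) : ℂ) := by
  simp only [Matrix.trace, Matrix.diag, Matrix.mul_apply, Matrix.conjTranspose_apply]
  refine Finset.sum_congr rfl fun j _ => Finset.sum_congr rfl fun i _ => ?_
  simpa [mul_comm] using Complex.mul_conj (M i j)

lemma eq_zero_of_traces {a b c d : ℕ} (M : Matrix (Fin a) (Fin b) ℂ)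
    (N : Matrix (Fin c) (Fin d) ℂ) (h : (Mᴴ * M).trace + (Nᴴ * N).trace = 0) :
    M = 0 ∧ N = 0 := by
  rw [trace_conjTranspose_mul_self, trace_conjTranspose_mul_self] at h
  have h' : (∑ j : Fin b, ∑ i : Fin a, Complex.normSq (M i j))
      + (∑ j : Fin d, ∑ i : Fin c, Complex.normSq (N i j)) = 0 := by
    have := congrArg Complex.re h
    simpa using this
  have hM : ∀ j : Fin b, ∀ i : Fin a, Complex.normSq (M i j) = 0 := by
    intro j i
    have h1 : (∑ j : Fin b, ∑ i : Fin a, Complex.normSq (M i j)) = 0 := by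
      have hn1 : 0 ≤ ∑ j : Fin b, ∑ i : Fin a, Complex.normSq (M i j) :=
        Finset.sum_nonneg fun _ _ => Finset.sum_nonneg fun _ _ => Complex.normSq_nonneg _
      have hn2 : 0 ≤ ∑ j : Fin d, ∑ i : Fin c, Complex.normSq (N i j) :=
        Finset.sum_nonneg fun _ _ => Finset.sum_nonneg fun _ _ => Complex.normSq_nonneg _
      linarith
    have := (Finset.sum_eq_zero_iff_of_nonneg (fun _ _ =>
      Finset.sum_nonneg fun _ _ => Complex.normSq_nonneg _)).mp h1 j (Finset.mem_univ j)
    exact (Finset.sum_eq_zero_iff_of_nonneg (fun _ _ =>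
      Complex.normSq_nonneg _)).mp this i (Finset.mem_univ i)
  have hN : ∀ j : Fin d, ∀ i : Fin c, Complex.normSq (N i j) = 0 := by
    intro j i
    have h1 : (∑ j : Fin d, ∑ i : Fin c, Complex.normSq (N i j)) = 0 := by
      have hn1 : 0 ≤ ∑ j : Fin b, ∑ i : Fin a, Complex.normSq (M i j) :=
        Finset.sum_nonneg fun _ _ => Finset.sum_nonneg fun _ _ => Complex.normSq_nonneg _
      have hn2 : 0 ≤ ∑ j : Fin d, ∑ i : Fin c, Complex.normSq (N i j) :=
        Finset.sum_nonneg fun _ _ => Finset.sum_nonneg fun _ _ => Complex.normSq_nonneg _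
      linarith
    have := (Finset.sum_eq_zero_iff_of_nonneg (fun _ _ =>
      Finset.sum_nonneg fun _ _ => Complex.normSq_nonneg _)).mp h1 j (Finset.mem_univ j)
    exact (Finset.sum_eq_zero_iff_of_nonneg (fun _ _ =>
      Complex.normSq_nonneg _)).mp this i (Finset.mem_univ i)
  constructor <;> ext i j
  · simpa using Complex.normSq_eq_zero.mp (hM j i)
  · simpa using Complex.normSq_eq_zero.mp (hN j i)

/-- For `A, B ∈ M_{m,n}(ℂ)`: `Aᴴ B = 0 ∧ A Bᴴ = 0 ↔ A Aᴴ B + B Aᴴ A = 0`. -/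
theorem disjoint_iff_zero_triple
    {m n : ℕ} (A B : Matrix (Fin m) (Fin n) ℂ) :
    (Aᴴ * B = 0 ∧ A * Bᴴ = 0) ↔ A * Aᴴ * B + B * Aᴴ * A = 0 := by
  constructor
  · rintro ⟨h1, h2⟩
    have h3 : B * Aᴴ = 0 := by
      have := congrArg Matrix.conjTranspose h2
      simpa using this
    rw [Matrix.mul_assoc A Aᴴ B, h1, Matrix.mul_zero, h3, Matrix.zero_mul, add_zero]
  · intro h
    have key : ((Aᴴ * B)ᴴ * (Aᴴ * B)).trace + ((B * Aᴴ)ᴴ * (B * Aᴴ)).trace = 0 := by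
      have h' : Bᴴ * (A * Aᴴ * B + B * Aᴴ * A) = 0 := by rw [h, Matrix.mul_zero]
      have h'' : Bᴴ * (A * Aᴴ * B) + Bᴴ * (B * Aᴴ * A) = 0 := by
        rw [← Matrix.mul_add]; exact h'
      have e1 : (Aᴴ * B)ᴴ * (Aᴴ * B) = Bᴴ * (A * Aᴴ * B) := by
        simp [Matrix.conjTranspose_mul, Matrix.mul_assoc]
      have e2 : ((B * Aᴴ)ᴴ * (B * Aᴴ)).trace = (Bᴴ * (B * Aᴴ * A)).trace :=
        calc ((B * Aᴴ)ᴴ * (B * Aᴴ)).trace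
            = ((A * Bᴴ) * (B * Aᴴ)).trace := by simp [Matrix.conjTranspose_mul]
          _ = ((B * Aᴴ) * (A * Bᴴ)).trace := (Matrix.trace_mul_comm _ _).symm
          _ = ((B * Aᴴ * A) * Bᴴ).trace := by rw [← Matrix.mul_assoc]
          _ = (Bᴴ * (B * Aᴴ * A)).trace := Matrix.trace_mul_comm _ _
      rw [e1, e2, ← Matrix.trace_add, h'', Matrix.trace_zero]
    obtain ⟨hAB, hBA⟩ := eq_zero_of_traces _ _ key
    refine ⟨hAB, ?_⟩
    have := congrArg Matrix.conjTranspose hBA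
    simpa using this

end Paper
end
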